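/- arXiv:1309.1512 — 2 statements merged into one kernel-verified Lean document; each statement's English description precedes it below -/
import Mathlib

section
/- Let (X,d) and (X,d') be two metrics on a compact space inducing the same topology. Then for a compactly generated pseudogroup G acting on X, the geometric entropy with respect to d is zero (respectively finite, respectively infinite) if and only if the geometric entropy with respect to d' is zero (respectively finite, respectively infinite). -/
section Entropy

variable {X : Type*}

/-- A distance function `d : X → X → ℝ` is a metric. -/
def IsMetric {X : Type*} (d : X → X → ℝ) : Prop :=
  (∀ x y, d x y = d y x) ∧ (∀ x y, d x y = 0 ↔ x = y) ∧ (∀ x y z, d x z ≤ d x y + d y z)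

/-- A partial map of `X`: a domain together with a map (a generator of a pseudogroup). -/
structure PMap (X : Type*) where
  dom : Set X
  toFun : X → X

open Classical in
/-- Apply a word (a list of generators) to a point, when defined. -/
noncomputable def wordApply : List (PMap X) → X → Option X
  | [], x => some x
  | g :: gs, x =>
    match wordApply gs x with
    | none => none
    | some y => if y ∈ g.dom then some (g.toFun y) else none

/-- `E` is a `(d,ε,ℓ)`-separated set for the pseudogroup generated by `L`. -/
def IsSep (L : List (PMap X)) (d : X → X → ℝ) (ε : ℝ) (ℓ : ℕ) (E : Finset X) : Prop :=
  ∀ w ∈ E, ∀ w' ∈ E, w ≠ w' →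
    ∃ gs : List (PMap X), (∀ g ∈ gs, g ∈ L) ∧ gs.length ≤ ℓ ∧
      ∃ u u' : X, wordApply gs w = some u ∧ wordApply gs w' = some u' ∧ ε ≤ d u u'

/-- The maximal cardinality (in `ℕ∞`) of a `(d,ε,ℓ)`-separated set. -/
noncomputable def maxSep (L : List (PMap X)) (d : X → X → ℝ) (ε : ℝ) (ℓ : ℕ) : ℕ∞ :=
  ⨆ (E : Finset X) (_ : IsSep L d ε ℓ E), (E.card : ℕ∞)

open Classical in
/-- `log(m)/ℓ`, valued in `EReal`, with value `⊤` when `m = ⊤`. -/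
noncomputable def logRate (m : ℕ∞) (ℓ : ℕ) : EReal :=
  if m = ⊤ then ⊤ else ((Real.log ((m.untopD 0 : ℕ) : ℝ) / (ℓ : ℝ) : ℝ) : EReal)

/-- The geometric entropy of the pseudogroup generated by `L` with respect to `d`. -/
noncomputable def entropy (L : List (PMap X)) (d : X → X → ℝ) : EReal :=
  ⨆ (ε : ℝ) (_ : 0 < ε),
    Filter.limsup (fun ℓ : ℕ => logRate (maxSep L d ε ℓ) ℓ) Filter.atTop

end Entropy

/-!
Two metrics inducing the same compact topology are uniformly comparable: for `ε > 0`, the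
continuous function `d'` attains a positive minimum `δ` on the compact set `{(x, y) | ε ≤ d x y}`,
which avoids the diagonal. So every `(d, ε, ℓ)`-separated set is `(d', δ, ℓ)`-separated, whence
`entropy L d ≤ entropy L d'`; by symmetry the two entropies are equal.
-/

section Separation

variable {X : Type*} {L : List (PMap X)} {d d' : X → X → ℝ}

lemma logRate_mono (ℓ : ℕ) : Monotone fun m : ℕ∞ => logRate m ℓ := by
  intro m m' hle
  rcases eq_or_ne m' ⊤ with rfl | hm'
  · simp [logRate]
  lift m' to ℕ using hm'
  lift m to ℕ using ne_top_of_le_ne_top (ENat.natCast_ne_top m') hle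
  have hlog : Real.log m ≤ Real.log m' := by
    rcases Nat.eq_zero_or_pos m with rfl | hm
    · simpa using Real.log_natCast_nonneg m'
    · exact Real.log_le_log (by exact_mod_cast hm) (by exact_mod_cast hle)
  simp only [logRate, ENat.natCast_ne_top, if_false, untopD_coe_enat, EReal.coe_le_coe_iff]
  exact div_le_div_of_nonneg_right hlog ℓ.cast_nonneg

lemma IsSep.mono {ε δ : ℝ} {ℓ : ℕ} {E : Finset X} (h : IsSep L d ε ℓ E)
    (hcomp : ∀ x y, ε ≤ d x y → δ ≤ d' x y) : IsSep L d' δ ℓ E := by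
  intro w hw w' hw' hne
  obtain ⟨gs, hgs, hlen, u, u', hu, hu', hsep⟩ := h w hw w' hw' hne
  exact ⟨gs, hgs, hlen, u, u', hu, hu', hcomp u u' hsep⟩

lemma maxSep_mono {ε δ : ℝ} (hcomp : ∀ x y, ε ≤ d x y → δ ≤ d' x y) (ℓ : ℕ) :
    maxSep L d ε ℓ ≤ maxSep L d' δ ℓ :=
  iSup₂_le fun E hE => le_iSup₂_of_le (f := fun E (_ : IsSep L d' δ ℓ E) => (E.card : ℕ∞))
    E (hE.mono hcomp) le_rfl

lemma entropy_le_of_forall_exists_le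
    (h : ∀ ε > 0, ∃ δ > 0, ∀ x y, ε ≤ d x y → δ ≤ d' x y) : entropy L d ≤ entropy L d' := by
  refine iSup₂_le fun ε hε => ?_
  obtain ⟨δ, hδ, hcomp⟩ := h ε hε
  refine le_iSup₂_of_le (f := fun δ (_ : 0 < δ) =>
    Filter.limsup (fun ℓ : ℕ => logRate (maxSep L d' δ ℓ) ℓ) Filter.atTop) δ hδ ?_
  exact Filter.limsup_le_limsup (Filter.Eventually.of_forall fun ℓ =>
    logRate_mono ℓ (maxSep_mono hcomp ℓ))

end Separation

lemma IsCompact.exists_pos_le_of_pos {Y : Type*} [TopologicalSpace Y] {K : Set Y}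
    (hK : IsCompact K) {g : Y → ℝ} (hg : ContinuousOn g K) (hpos : ∀ p ∈ K, 0 < g p) :
    ∃ δ > 0, ∀ p ∈ K, δ ≤ g p := by
  rcases K.eq_empty_or_nonempty with rfl | hne
  · exact ⟨1, one_pos, by simp⟩
  · obtain ⟨p₀, hp₀, hmin⟩ := hK.exists_isMinOn hne hg
    exact ⟨g p₀, hpos p₀ hp₀, fun p hp => hmin hp⟩

section MetricTopology

variable {X : Type*} {d d' : X → X → ℝ}

abbrev IsMetric.toPseudoMetricSpace (hd : IsMetric d) : PseudoMetricSpace X where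
  dist := d
  dist_self x := (hd.2.1 x x).2 rfl
  dist_comm := hd.1
  dist_triangle := hd.2.2

lemma IsMetric.nonneg (hd : IsMetric d) (x y : X) : 0 ≤ d x y :=
  @dist_nonneg X hd.toPseudoMetricSpace x y

lemma IsMetric.topology_eq [t : TopologicalSpace X] (hd : IsMetric d)
    (hind : ∀ s : Set X, IsOpen s ↔ ∀ x ∈ s, ∃ ε : ℝ, 0 < ε ∧ {y | d x y < ε} ⊆ s) :
    t = hd.toPseudoMetricSpace.toUniformSpace.toTopologicalSpace := by
  let := hd.toPseudoMetricSpace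
  have hdist : ∀ x y : X, dist y x = d x y := fun x y => hd.1 y x
  ext s
  rw [hind, Metric.isOpen_iff]
  simp only [Metric.ball, gt_iff_lt, hdist]

lemma IsMetric.continuous_uncurry [TopologicalSpace X] (hd : IsMetric d)
    (hind : ∀ s : Set X, IsOpen s ↔ ∀ x ∈ s, ∃ ε : ℝ, 0 < ε ∧ {y | d x y < ε} ⊆ s) :
    Continuous fun p : X × X => d p.1 p.2 := by
  let := hd.toPseudoMetricSpace.replaceTopology (hd.topology_eq hind)
  exact continuous_dist

lemma IsMetric.exists_pos_le_of_le [TopologicalSpace X] [CompactSpace X]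
    (hd : IsMetric d) (hd' : IsMetric d') (hc : Continuous fun p : X × X => d p.1 p.2)
    (hc' : Continuous fun p : X × X => d' p.1 p.2) {ε : ℝ} (hε : 0 < ε) :
    ∃ δ > 0, ∀ x y, ε ≤ d x y → δ ≤ d' x y := by
  have hK : IsCompact {p : X × X | ε ≤ d p.1 p.2} :=
    (isClosed_le continuous_const hc).isCompact
  have hpos : ∀ p ∈ {p : X × X | ε ≤ d p.1 p.2}, 0 < d' p.1 p.2 := by
    rintro ⟨x, y⟩ (hxy : ε ≤ d x y)
    refine (hd'.nonneg x y).lt_of_ne fun h => ?_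
    rw [(hd'.2.1 x y).1 h.symm, (hd.2.1 y y).2 rfl] at hxy
    exact hε.not_ge hxy
  obtain ⟨δ, hδ, hle⟩ := hK.exists_pos_le_of_pos hc'.continuousOn hpos
  exact ⟨δ, hδ, fun x y hxy => hle (x, y) hxy⟩

end MetricTopology

/-- Let `d` and `d'` be two metrics on a compact space `X` inducing its
topology.  For a compactly generated pseudogroup (with generating set `L`) acting on `X`, the
geometric entropy with respect to `d` is zero (resp. finite, resp. infinite) if and only if
the geometric entropy with respect to `d'` is zero (resp. finite, resp. infinite). -/
theorem stmt15 {X : Type*} [TopologicalSpace X] [CompactSpace X]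
    (d d' : X → X → ℝ) (hd : IsMetric d) (hd' : IsMetric d')
    (hind : ∀ s : Set X, IsOpen s ↔ ∀ x ∈ s, ∃ ε : ℝ, 0 < ε ∧ {y | d x y < ε} ⊆ s)
    (hind' : ∀ s : Set X, IsOpen s ↔ ∀ x ∈ s, ∃ ε : ℝ, 0 < ε ∧ {y | d' x y < ε} ⊆ s)
    (L : List (PMap X)) :
    (entropy L d = 0 ↔ entropy L d' = 0) ∧
    (entropy L d < ⊤ ↔ entropy L d' < ⊤) ∧
    (entropy L d = ⊤ ↔ entropy L d' = ⊤) := by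
  have hc := hd.continuous_uncurry hind
  have hc' := hd'.continuous_uncurry hind'
  have h : entropy L d = entropy L d' :=
    le_antisymm
      (entropy_le_of_forall_exists_le fun _ hε => hd.exists_pos_le_of_le hd' hc hc' hε)
      (entropy_le_of_forall_exists_le fun _ hε => hd'.exists_pos_le_of_le hd hc' hc hε)
  simp only [h, and_self]
end

section
/- Let (m_ℓ) be the sequence alternating 2,3,2,3,… and (n_ℓ) the sequence in which the ℓ-th occurrence of 3 is followed by 2^ℓ occurrences of 2. Then the subgroup chains H_ℓ = (m_1⋯m_ℓ)ℤ and G_ℓ = (n_1⋯n_ℓ)ℤ in ℤ are tower equivalent, but they are not bounded tower equivalent: for any choice of indexing functions ℓ ↦ ν_ℓ and ν ↦ ℓ_ν realizing the tower equivalence, sup_ℓ |ν_ℓ − ℓ| = ∞ or sup_ν |ℓ_ν − ν| = ∞. -/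
open scoped BigOperators

/-- The alternating sequence of covering degrees `2,3,2,3,…` (so `mseq 0 = m₁ = 2`). -/
def mseq (i : ℕ) : ℕ := if Even i then 2 else 3

open Classical in
/-- The sequence of covering degrees `2,3,2,2,3,2,2,2,2,3,…` in which the `ℓ`-th occurrence
of `3` (at position `ℓ + 2^ℓ - 1`, in 1-based indexing) is followed by `2^ℓ` occurrences of
`2`; here `nseq i = n_{i+1}`. -/
noncomputable def nseq (i : ℕ) : ℕ :=
  if ∃ ℓ : ℕ, 1 ≤ ℓ ∧ i + 1 = ℓ + 2 ^ ℓ - 1 then 3 else 2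

/-- The subgroup `(m₁ ⋯ m_ℓ)ℤ ⊆ ℤ` for the alternating sequence. -/
noncomputable def Hsub (ℓ : ℕ) : AddSubgroup ℤ :=
  AddSubgroup.zmultiples ((∏ i ∈ Finset.range ℓ, mseq i : ℕ) : ℤ)

/-- The subgroup `(n₁ ⋯ n_ν)ℤ ⊆ ℤ` for the second sequence. -/
noncomputable def Gsub (ν : ℕ) : AddSubgroup ℤ :=
  AddSubgroup.zmultiples ((∏ i ∈ Finset.range ν, nseq i : ℕ) : ℤ)

/-!
Both chains consist of subgroups `2^a 3^b ℤ`, so inclusions are divisibilities of prefix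
products. Every `nₗ` divides `6 = m_{2ℓ-1} m_{2ℓ}`, and the prefix of `(nₗ)` ending at the
`k`-th `3` has product `2^(2^k - 1) 3^k`, which `6^k` divides; this gives the tower equivalence.
Conversely `H_{2k} = 6^k ℤ` needs `k` factors `3`, hence at least `k + 2^k - 1` terms of `(nₗ)`,
so `ν_{2k} - 2k` is unbounded.
-/

lemma prod_range_dvd_prod_range {M : Type*} [CommMonoid M] (f : ℕ → M) {a b : ℕ} (h : a ≤ b) :
    ∏ i ∈ Finset.range a, f i ∣ ∏ i ∈ Finset.range b, f i :=
  Finset.prod_dvd_prod_of_subset _ _ _ (Finset.range_subset_range.2 h)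

/-- `n₁ ⋯ n_{threePrefixLen k}` is the shortest prefix containing `k` threes. -/
def threePrefixLen (k : ℕ) : ℕ := k + 2 ^ k - 1

lemma threePrefixLen_succ (k : ℕ) : threePrefixLen (k + 1) = threePrefixLen k + 2 ^ k + 1 := by
  have : 1 ≤ 2 ^ k := Nat.one_le_two_pow
  simp only [threePrefixLen, pow_succ]
  omega

lemma threePrefixLen_strictMono : StrictMono threePrefixLen :=
  strictMono_nat_of_lt_succ fun k => by
    rw [threePrefixLen_succ]; exact Nat.lt_succ_of_le (Nat.le_add_right _ _)

lemma nseq_threePrefixLen_add_two_pow (k : ℕ) : nseq (threePrefixLen k + 2 ^ k) = 3 :=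
  if_pos ⟨k + 1, by omega, (threePrefixLen_succ k).symm⟩

lemma nseq_threePrefixLen_add_of_lt {k j : ℕ} (hj : j < 2 ^ k) :
    nseq (threePrefixLen k + j) = 2 := by
  refine if_neg ?_
  rintro ⟨ℓ, -, hℓ⟩
  have hlo : threePrefixLen k < threePrefixLen ℓ := by
    change _ < ℓ + 2 ^ ℓ - 1; omega
  have hhi : threePrefixLen ℓ < threePrefixLen (k + 1) := by
    rw [threePrefixLen_succ]; change ℓ + 2 ^ ℓ - 1 < _; omega
  rw [threePrefixLen_strictMono.lt_iff_lt] at hlo hhi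
  omega

lemma prod_range_threePrefixLen_add {k j : ℕ} (hj : j ≤ 2 ^ k) :
    ∏ i ∈ Finset.range (threePrefixLen k + j), nseq i =
      (∏ i ∈ Finset.range (threePrefixLen k), nseq i) * 2 ^ j := by
  induction j with
  | zero => simp
  | succ j ih =>
    rw [← add_assoc, Finset.prod_range_succ, ih (by omega),
      nseq_threePrefixLen_add_of_lt (by omega), pow_succ, mul_assoc]

lemma prod_range_threePrefixLen (k : ℕ) :
    ∏ i ∈ Finset.range (threePrefixLen k), nseq i = 2 ^ (2 ^ k - 1) * 3 ^ k := by
  induction k with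
  | zero => simp [threePrefixLen]
  | succ k ih =>
    have : 1 ≤ 2 ^ k := Nat.one_le_two_pow
    rw [threePrefixLen_succ, Finset.prod_range_succ, prod_range_threePrefixLen_add le_rfl, ih,
      nseq_threePrefixLen_add_two_pow, show 2 ^ (k + 1) - 1 = 2 ^ k - 1 + 2 ^ k by omega]
    ring

lemma not_three_pow_dvd_prod_nseq {k ν : ℕ} (hν : ν < threePrefixLen k) :
    ¬ 3 ^ k ∣ ∏ i ∈ Finset.range ν, nseq i := by
  intro h3
  obtain _ | k := k
  · simp [threePrefixLen] at hν
  have hprefix : ∏ i ∈ Finset.range ν, nseq i ∣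
      ∏ i ∈ Finset.range (threePrefixLen k + 2 ^ k), nseq i :=
    prod_range_dvd_prod_range nseq (by rw [threePrefixLen_succ] at hν; omega)
  rw [prod_range_threePrefixLen_add le_rfl, prod_range_threePrefixLen,
    show 2 ^ (2 ^ k - 1) * 3 ^ k * 2 ^ 2 ^ k = 3 ^ k * 2 ^ (2 ^ k - 1 + 2 ^ k) by ring] at hprefix
  have h3k : 3 ^ k * 3 ∣ 3 ^ k * 2 ^ (2 ^ k - 1 + 2 ^ k) := by
    rw [← pow_succ]; exact h3.trans hprefix
  have h32 : 3 ∣ 2 ^ (2 ^ k - 1 + 2 ^ k) := Nat.dvd_of_mul_dvd_mul_left (by positivity) h3k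
  have := Nat.prime_three.dvd_of_dvd_pow h32
  omega

lemma nseq_dvd_six (i : ℕ) : nseq i ∣ 6 := by
  unfold nseq
  split_ifs <;> norm_num

lemma prod_range_two_mul_mseq (k : ℕ) : ∏ i ∈ Finset.range (2 * k), mseq i = 6 ^ k := by
  induction k with
  | zero => simp
  | succ k ih =>
    rw [show 2 * (k + 1) = 2 * k + 1 + 1 by ring, Finset.prod_range_succ, Finset.prod_range_succ,
      ih, mseq, mseq, if_pos (even_two_mul k), if_neg (by simp [parity_simps])]
    ring

lemma Gsub_le_Hsub_iff {ν ℓ : ℕ} :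
    Gsub ν ≤ Hsub ℓ ↔ (∏ i ∈ Finset.range ℓ, mseq i) ∣ ∏ i ∈ Finset.range ν, nseq i := by
  rw [Gsub, Hsub, AddSubgroup.zmultiples_le, Int.mem_zmultiples_iff, Int.natCast_dvd_natCast]

lemma Hsub_le_Gsub_iff {ν ℓ : ℕ} :
    Hsub ℓ ≤ Gsub ν ↔ (∏ i ∈ Finset.range ν, nseq i) ∣ ∏ i ∈ Finset.range ℓ, mseq i := by
  rw [Gsub, Hsub, AddSubgroup.zmultiples_le, Int.mem_zmultiples_iff, Int.natCast_dvd_natCast]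

lemma Gsub_threePrefixLen_le_Hsub (ℓ : ℕ) : Gsub (threePrefixLen ℓ) ≤ Hsub ℓ := by
  have hℓ : ℓ ≤ 2 ^ ℓ - 1 := by have := Nat.lt_two_pow_self (n := ℓ); omega
  rw [Gsub_le_Hsub_iff, prod_range_threePrefixLen]
  calc ∏ i ∈ Finset.range ℓ, mseq i
      ∣ ∏ i ∈ Finset.range (2 * ℓ), mseq i := prod_range_dvd_prod_range mseq (by omega)
    _ = 2 ^ ℓ * 3 ^ ℓ := by rw [prod_range_two_mul_mseq, ← mul_pow]; norm_num
    _ ∣ 2 ^ (2 ^ ℓ - 1) * 3 ^ ℓ := mul_dvd_mul_right (pow_dvd_pow 2 hℓ) _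

lemma Hsub_two_mul_le_Gsub (ν : ℕ) : Hsub (2 * ν) ≤ Gsub ν := by
  rw [Hsub_le_Gsub_iff, prod_range_two_mul_mseq]
  calc ∏ i ∈ Finset.range ν, nseq i
      ∣ ∏ _i ∈ Finset.range ν, 6 := Finset.prod_dvd_prod_of_dvd _ _ fun i _ => nseq_dvd_six i
    _ = 6 ^ ν := by simp

/-- The subgroup chains `H ℓ = (m₁⋯m_ℓ)ℤ` and `G ν = (n₁⋯n_ν)ℤ` in `ℤ`
associated to the sequences `2,3,2,3,…` and `2,3,2,2,3,2,2,2,2,3,…` are tower equivalent,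
but not bounded tower equivalent: for any indexing functions `ℓ ↦ ν_ℓ` and `ν ↦ ℓ_ν`
realizing the tower equivalence, the displacement `max(sup_ℓ|ν_ℓ − ℓ|, sup_ν|ℓ_ν − ν|)`
is infinite. -/
theorem stmt17 :
    ((∀ ℓ : ℕ, ∃ ν : ℕ, Gsub ν ≤ Hsub ℓ) ∧ (∀ ν : ℕ, ∃ ℓ : ℕ, Hsub ℓ ≤ Gsub ν)) ∧
    ¬ ∃ (νf ℓf : ℕ → ℕ) (D : ℕ),
        (∀ ℓ : ℕ, Gsub (νf ℓ) ≤ Hsub ℓ ∧ (νf ℓ : ℤ) - ℓ ≤ D ∧ (ℓ : ℤ) - νf ℓ ≤ D) ∧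
        (∀ ν : ℕ, Hsub (ℓf ν) ≤ Gsub ν ∧ (ℓf ν : ℤ) - ν ≤ D ∧ (ν : ℤ) - ℓf ν ≤ D) := by
  refine ⟨⟨fun ℓ => ⟨_, Gsub_threePrefixLen_le_Hsub ℓ⟩, fun ν => ⟨_, Hsub_two_mul_le_Gsub ν⟩⟩, ?_⟩
  rintro ⟨νf, -, D, hνf, -⟩
  set k := D + 3
  obtain ⟨hle, hD, -⟩ := hνf (2 * k)
  have h6 : 6 ^ k ∣ ∏ i ∈ Finset.range (νf (2 * k)), nseq i := by
    rw [← prod_range_two_mul_mseq]; exact Gsub_le_Hsub_iff.1 hle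
  have hlt : νf (2 * k) < threePrefixLen k := by
    have : D < 2 ^ D := Nat.lt_two_pow_self
    have : 2 ^ k = 8 * 2 ^ D := by rw [pow_add]; ring
    rw [threePrefixLen]; omega
  exact not_three_pow_dvd_prod_nseq hlt ((pow_dvd_pow_of_dvd (by norm_num) k).trans h6)
end
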